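/- Fix y > 0 and define, for x > 1, G(x,y) = −∫₀¹ y²·√(1−t²)·Im √(1 − 1/(x + i t y)) dt, with √ the principal branch of the complex square root (and √(1−t²) the real square root). Then x ↦ G(x,y) is differentiable on (1,∞) with derivative ∂G/∂x (x,y) = −∫₀¹ ( y²·√(1−t²) / 2 ) · Im( 1/( (x+ity)² · √(1 − 1/(x+ity)) ) ) dt, and ∂G/∂x (x,y) ≥ 0 for every x > 1. -/

import Mathlib

open Complex Metric Real

namespace Stmt11Aux

lemma z_re (x : ℝ) (c : ℂ) (hc : c.re = 0) : ((x:ℂ) + c).re = x := by simp [hc]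

lemma z_im (x : ℝ) (c : ℂ) : ((x:ℂ) + c).im = c.im := by simp

lemma z_ne (x : ℝ) (hx : 0 < x) (c : ℂ) (hc : c.re = 0) : (x:ℂ) + c ≠ 0 := by
  intro h
  have h2 := congrArg Complex.re h
  rw [z_re x c hc] at h2
  simp at h2
  exact hx.ne' h2

lemma normSq_z (x : ℝ) (c : ℂ) (hc : c.re = 0) :
    normSq ((x:ℂ)+c) = x^2 + c.im^2 := by
  rw [normSq_apply, z_re x c hc, z_im]; ring

lemma w_re (x : ℝ) (c : ℂ) (hc : c.re = 0) :
    ((1:ℂ) - 1/((x:ℂ)+c)).re = 1 - x/(x^2+c.im^2) := by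
  rw [one_div, Complex.sub_re, Complex.inv_re, normSq_z x c hc, z_re x c hc, Complex.one_re]

lemma w_im (x : ℝ) (c : ℂ) (hc : c.re = 0) :
    ((1:ℂ) - 1/((x:ℂ)+c)).im = c.im/(x^2+c.im^2) := by
  rw [one_div, Complex.sub_im, Complex.inv_im, normSq_z x c hc, z_im, Complex.one_im]
  ring

lemma w_re_pos (x : ℝ) (hx : 1 < x) (c : ℂ) (hc : c.re = 0) :
    0 < ((1:ℂ) - 1/((x:ℂ)+c)).re := by
  rw [w_re x c hc]
  have hN : (0:ℝ) < x^2 + c.im^2 := by positivity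
  have hxN : x < x^2 + c.im^2 := by nlinarith [sq_nonneg c.im]
  rw [sub_pos, div_lt_one hN]
  exact hxN

lemma w_re_ge (x : ℝ) (hx : 1 < x) (c : ℂ) (hc : c.re = 0) :
    1 - 1/x ≤ ((1:ℂ) - 1/((x:ℂ)+c)).re := by
  rw [w_re x c hc]
  have hx0 : (0:ℝ) < x := by linarith
  have : x/(x^2+c.im^2) ≤ 1/x := by
    rw [div_le_div_iff₀ (by positivity) hx0]
    nlinarith [sq_nonneg c.im]
  linarith

lemma w_ne (x : ℝ) (hx : 1 < x) (c : ℂ) (hc : c.re = 0) :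
    ((1:ℂ) - 1/((x:ℂ)+c)) ≠ 0 := by
  intro h
  have := w_re_pos x hx c hc
  rw [h] at this
  simp at this

lemma w_slit (x : ℝ) (hx : 1 < x) (c : ℂ) (hc : c.re = 0) :
    ((1:ℂ) - 1/((x:ℂ)+c)) ∈ slitPlane :=
  mem_slitPlane_iff.mpr (Or.inl (w_re_pos x hx c hc))

-- general facts about the principal square root
lemma sqrt_re_pos {w : ℂ} (hw : 0 < w.re) : 0 < (w ^ (1/2:ℂ)).re := by
  have hw0 : w ≠ 0 := by intro h; rw [h] at hw; simp at hw
  rw [Complex.cpow_def_of_ne_zero hw0, Complex.exp_re]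
  have him : (Complex.log w * (1/2:ℂ)).im = w.arg / 2 := by
    simp [Complex.mul_im, Complex.log_im]
    ring
  rw [him]
  have harg : |w.arg| < π/2 := Complex.abs_arg_lt_pi_div_two_iff.mpr (Or.inl hw)
  have h1 := abs_lt.mp harg
  have : 0 < Real.cos (w.arg / 2) := by
    apply Real.cos_pos_of_mem_Ioo
    constructor <;> [linarith [Real.pi_pos]; linarith [Real.pi_pos]]
  positivity

lemma sqrt_im_nonneg {w : ℂ} (hw : 0 < w.re) (hwi : 0 ≤ w.im) : 0 ≤ (w ^ (1/2:ℂ)).im := by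
  have hw0 : w ≠ 0 := by intro h; rw [h] at hw; simp at hw
  rw [Complex.cpow_def_of_ne_zero hw0, Complex.exp_im]
  have him : (Complex.log w * (1/2:ℂ)).im = w.arg / 2 := by
    simp [Complex.mul_im, Complex.log_im]
    ring
  rw [him]
  have harg0 : 0 ≤ w.arg := Complex.arg_nonneg_iff.mpr hwi
  have hargpi : w.arg ≤ π := Complex.arg_le_pi w
  have : 0 ≤ Real.sin (w.arg / 2) := by
    apply Real.sin_nonneg_of_nonneg_of_le_pi <;> linarith [Real.pi_pos]
  positivity

lemma sqrt_mul_self {w : ℂ} (hw0 : w ≠ 0) : w ^ (1/2:ℂ) * w ^ (1/2:ℂ) = w := by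
  rw [← Complex.cpow_add _ _ hw0]
  norm_num

lemma sqrt_ne_zero {w : ℂ} (hw0 : w ≠ 0) : w ^ (1/2:ℂ) ≠ 0 := by
  intro h
  have := sqrt_mul_self hw0
  rw [h, mul_zero] at this
  exact hw0 this.symm

/-- The key sign lemma. -/
lemma im_nonpos (x : ℝ) (hx : 1 < x) (c : ℂ) (hc : c.re = 0) (hs : 0 ≤ c.im) :
    (1 / (((x:ℂ)+c)^2 * (((1:ℂ) - 1/((x:ℂ)+c)) ^ (1/2:ℂ)))).im ≤ 0 := by
  set z : ℂ := (x:ℂ) + c with hz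
  set w : ℂ := (1:ℂ) - 1/z with hwdef
  set u : ℂ := w ^ (1/2:ℂ) with hu
  set s : ℝ := c.im with hsdef
  set N : ℝ := x^2 + s^2 with hN
  have hN0 : (0:ℝ) < N := by positivity
  have hwre : 0 < w.re := w_re_pos x hx c hc
  have hwim : 0 ≤ w.im := by rw [hwdef, w_im x c hc]; positivity
  have hw0 : w ≠ 0 := w_ne x hx c hc
  set a : ℝ := u.re with ha'
  set b : ℝ := u.im with hb'
  have ha : 0 < a := sqrt_re_pos hwre
  have hb : 0 ≤ b := sqrt_im_nonneg hwre hwim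
  have husq := sqrt_mul_self hw0
  have hA : a*a - b*b = 1 - x/N := by
    have h := congrArg Complex.re husq
    rw [Complex.mul_re] at h
    rw [ha', hb', hu, h, hwdef, hz, w_re x c hc, hN, hsdef]
  have hB : a*b + b*a = s/N := by
    have h := congrArg Complex.im husq
    rw [Complex.mul_im] at h
    rw [ha', hb', hu, h, hwdef, hz, w_im x c hc, hN, hsdef]
  have hA' : (a*a - b*b)*N = N - x := by
    rw [hA]; field_simp
  have hB' : (a*b + b*a)*N = s := by
    rw [hB]; field_simp
  -- the main inequality
  have key : 0 ≤ (x^2-s^2)*b + (2*x*s)*a := by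
    have e1 : 2*N*a*((x^2-s^2)*b + (2*x*s)*a) =
        (x^2-s^2)*s + 4*x*s*(b*b)*N + 4*x*s*(N-x) := by
      linear_combination (x^2-s^2) * hB' + 4*x*s*hA'
    have e2 : 0 ≤ (x^2-s^2)*s + 4*x*s*(b*b)*N + 4*x*s*(N-x) := by
      have h1 : N - x = x*(x-1) + s^2 := by rw [hN]; ring
      rw [h1]
      have hx0 : (0:ℝ) ≤ x := by linarith
      have hx1 : (0:ℝ) ≤ x - 1 := by linarith
      nlinarith [mul_nonneg (mul_nonneg hs hs) hs,
        mul_nonneg (mul_nonneg (mul_nonneg hx0 hs) (mul_nonneg hb hb)) hN0.le,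
        mul_nonneg (mul_nonneg (mul_nonneg hx0 hx0) hs) hx1,
        mul_nonneg (mul_nonneg (mul_nonneg hs hs) hs) hx1,
        mul_nonneg (mul_nonneg hx0 hx0) hs]
    have h2Na : 0 < 2*N*a := by positivity
    nlinarith [e1, e2]
  -- conclude
  have himv : (z^2*u).im = (x^2 - s^2)*b + (2*x*s)*a := by
    rw [pow_two, Complex.mul_im, Complex.mul_im, Complex.mul_re,
      z_re x c hc, z_im]
    rw [← hsdef, ← ha', ← hb']
    ring
  rw [one_div, Complex.inv_im, himv]
  apply div_nonpos_of_nonpos_of_nonneg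
  · linarith
  · exact Complex.normSq_nonneg _

/-- Derivative of the inner integrand with respect to `x`. -/
lemma hasDerivAt_inner (r : ℝ) (c : ℂ) (hc : c.re = 0) (x : ℝ) (hx : 1 < x) :
    HasDerivAt (fun x' : ℝ => r * (((1:ℂ) - 1/((x':ℂ) + c)) ^ (1/2:ℂ)).im)
      ((r/2) * (1/(((x:ℂ) + c)^2 * (((1:ℂ) - 1/((x:ℂ) + c)) ^ (1/2:ℂ)))).im) x := by
  have hx0 : (0:ℝ) < x := by linarith
  have hzne : ((x:ℂ) + c) ≠ 0 := z_ne x hx0 c hc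
  have hw0 : ((1:ℂ) - 1/((x:ℂ)+c)) ≠ 0 := w_ne x hx c hc
  -- complex derivative
  have h1 : HasDerivAt (fun w : ℂ => ((1:ℂ) - 1/(w + c))) (1/((x:ℂ)+c)^2) ((x:ℂ)) := by
    have h0 : HasDerivAt (fun w : ℂ => w + c) 1 (x:ℂ) := (hasDerivAt_id _).add_const c
    have hinv := (h0.inv hzne).const_sub 1
    simp only [one_div]
    refine hinv.congr_deriv ?_
    ring
  have h2 : HasDerivAt (fun w : ℂ => ((1:ℂ) - 1/(w + c)) ^ (1/2:ℂ))
      ((1/2:ℂ) * ((1:ℂ) - 1/((x:ℂ)+c)) ^ ((1/2:ℂ) - 1) * (1/((x:ℂ)+c)^2)) ((x:ℂ)) :=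
    h1.cpow_const (w_slit x hx c hc)
  have h3 : HasDerivAt (fun x' : ℝ => ((1:ℂ) - 1/((x':ℂ) + c)) ^ (1/2:ℂ))
      ((1/2:ℂ) * ((1:ℂ) - 1/((x:ℂ)+c)) ^ ((1/2:ℂ) - 1) * (1/((x:ℂ)+c)^2)) x :=
    h2.comp_ofReal
  have h4 := (Complex.imCLM.hasFDerivAt.comp_hasDerivAt x h3).const_mul r
  refine h4.congr_deriv ?_
  -- value equality
  · have hpow : ((1:ℂ) - 1/((x:ℂ)+c)) ^ ((1/2:ℂ) - 1)
        = (((1:ℂ) - 1/((x:ℂ)+c)) ^ (1/2:ℂ))⁻¹ := by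
      rw [show (1/2:ℂ) - 1 = -(1/2) by ring, Complex.cpow_neg]
    have hune : (((1:ℂ) - 1/((x:ℂ)+c)) ^ (1/2:ℂ)) ≠ 0 := sqrt_ne_zero hw0
    have hval : (1/2:ℂ) * ((1:ℂ) - 1/((x:ℂ)+c)) ^ ((1/2:ℂ) - 1) * (1/((x:ℂ)+c)^2)
        = ((1/2:ℝ):ℂ) * (1/(((x:ℂ)+c)^2 * (((1:ℂ) - 1/((x:ℂ)+c)) ^ (1/2:ℂ)))) := by
      rw [hpow]
      push_cast
      field_simp
    change r * ((1/2:ℂ) * ((1:ℂ) - 1/((x:ℂ)+c)) ^ ((1/2:ℂ) - 1) * (1/((x:ℂ)+c)^2)).im = _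
    rw [hval, Complex.mul_im]
    simp
    ring

lemma cont_w (x y : ℝ) (hx : 1 < x) :
    Continuous (fun t : ℝ => (1:ℂ) - 1/((x:ℂ)+(t:ℂ)*(y:ℂ)*I)) := by
  apply continuous_const.sub
  apply Continuous.div continuous_const
  · fun_prop
  · intro t
    exact z_ne x (by linarith) _ (by simp)

lemma cont_u (x y : ℝ) (hx : 1 < x) :
    Continuous (fun t : ℝ => ((1:ℂ) - 1/((x:ℂ)+(t:ℂ)*(y:ℂ)*I)) ^ (1/2:ℂ)) := by
  rw [continuous_iff_continuousAt]
  intro t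
  have h := continuousAt_cpow_const (b := (1/2:ℂ)) (w_slit x hx ((t:ℂ)*(y:ℂ)*I) (by simp))
  exact ContinuousAt.comp (f := fun t:ℝ => (1:ℂ) - 1/((x:ℂ)+(t:ℂ)*(y:ℂ)*I)) (x := t) h
    (cont_w x y hx).continuousAt

lemma contF (x y : ℝ) (hx : 1 < x) :
    Continuous (fun t : ℝ => y ^ 2 * Real.sqrt (1 - t ^ 2) *
      (((1 : ℂ) - 1 / ((x : ℂ) + (t : ℂ) * (y : ℂ) * Complex.I)) ^ (1/2 : ℂ)).im) := by
  apply Continuous.mul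
  · fun_prop
  · exact Complex.continuous_im.comp (cont_u x y hx)

lemma contF' (x y : ℝ) (hx : 1 < x) :
    Continuous (fun t : ℝ => (y ^ 2 * Real.sqrt (1 - t ^ 2) / 2) *
      (1 / (((x : ℂ) + (t : ℂ) * (y : ℂ) * Complex.I) ^ 2 *
        ((1 - 1 / ((x : ℂ) + (t : ℂ) * (y : ℂ) * Complex.I)) ^ (1/2 : ℂ)))).im) := by
  apply Continuous.mul
  · fun_prop
  · apply Complex.continuous_im.comp
    apply Continuous.div continuous_const
    · have hzc : Continuous fun t:ℝ => ((x:ℂ)+(t:ℂ)*(y:ℂ)*I) := by fun_prop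
      exact ((hzc.pow 2).mul (cont_u x y hx))
    · intro t
      apply mul_ne_zero
      · exact pow_ne_zero _ (z_ne x (by linarith) _ (by simp))
      · exact sqrt_ne_zero (w_ne x hx _ (by simp))

lemma abs_u_ge (x : ℝ) (hx : 1 < x) (c : ℂ) (hc : c.re = 0) (m : ℝ) (hm : 1 < m) (hmx : m ≤ x) :
    Real.sqrt (1 - 1/m) ≤ ‖((1:ℂ) - 1/((x:ℂ)+c)) ^ (1/2:ℂ)‖ := by
  have hw0 := w_ne x hx c hc
  have h12 : (1/2:ℂ) = ((1/2:ℝ):ℂ) := by norm_num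
  have habs : ‖((1:ℂ) - 1/((x:ℂ)+c)) ^ (1/2:ℂ)‖
      = ‖(1:ℂ)-1/((x:ℂ)+c)‖ ^ ((1/2):ℝ) := by
    rw [h12, Complex.norm_cpow_of_ne_zero hw0, Complex.ofReal_re, Complex.ofReal_im,
      mul_zero, Real.exp_zero, div_one]
  rw [habs]
  have hm0 : (0:ℝ) < m := by linarith
  have h1m : 0 ≤ 1 - 1/m := by
    have : 1/m ≤ 1 := by rw [div_le_one hm0]; linarith
    linarith
  have hle : 1 - 1/m ≤ ‖(1:ℂ)-1/((x:ℂ)+c)‖ := by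
    have h1 : 1 - 1/x ≤ ((1:ℂ) - 1/((x:ℂ)+c)).re := w_re_ge x hx c hc
    have h2 : ((1:ℂ) - 1/((x:ℂ)+c)).re ≤ ‖(1:ℂ)-1/((x:ℂ)+c)‖ :=
      Complex.re_le_norm _
    have h3 : 1/x ≤ 1/m := by
      apply one_div_le_one_div_of_le hm0 hmx
    linarith
  calc Real.sqrt (1 - 1/m) = (1 - 1/m) ^ ((1/2):ℝ) := Real.sqrt_eq_rpow _
    _ ≤ ‖(1:ℂ)-1/((x:ℂ)+c)‖ ^ ((1/2):ℝ) := by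
      apply Real.rpow_le_rpow h1m hle (by norm_num)

end Stmt11Aux

open Stmt11Aux

theorem stmt_11 (y : ℝ) (hy : 0 < y) :
    ∀ x : ℝ, 1 < x →
      HasDerivAt (fun x' : ℝ =>
          -∫ t in (0 : ℝ)..1, y ^ 2 * Real.sqrt (1 - t ^ 2) *
            (((1 : ℂ) - 1 / ((x' : ℂ) + (t : ℂ) * (y : ℂ) * Complex.I)) ^ (1/2 : ℂ)).im)
        (-∫ t in (0 : ℝ)..1, (y ^ 2 * Real.sqrt (1 - t ^ 2) / 2) *
            (1 / (((x : ℂ) + (t : ℂ) * (y : ℂ) * Complex.I) ^ 2 *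
              ((1 - 1 / ((x : ℂ) + (t : ℂ) * (y : ℂ) * Complex.I)) ^ (1/2 : ℂ)))).im) x
      ∧ 0 ≤ -∫ t in (0 : ℝ)..1, (y ^ 2 * Real.sqrt (1 - t ^ 2) / 2) *
            (1 / (((x : ℂ) + (t : ℂ) * (y : ℂ) * Complex.I) ^ 2 *
              ((1 - 1 / ((x : ℂ) + (t : ℂ) * (y : ℂ) * Complex.I)) ^ (1/2 : ℂ)))).im := by
  intro x hx
  set m : ℝ := (x+1)/2 with hmdef
  have hm1 : 1 < m := by rw [hmdef]; linarith
  have hm0 : (0:ℝ) < m := by linarith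
  have hε : (0:ℝ) < (x-1)/2 := by linarith
  have h1m : 0 < 1 - 1/m := by
    have : 1/m < 1 := by rw [div_lt_one hm0]; linarith
    linarith
  have hsq : 0 < Real.sqrt (1 - 1/m) := Real.sqrt_pos.mpr h1m
  constructor
  · -- differentiability
    have key := intervalIntegral.hasDerivAt_integral_of_dominated_loc_of_deriv_le
      (𝕜 := ℝ) (μ := MeasureTheory.volume) (a := 0) (b := 1)
      (F := fun x' t => y ^ 2 * Real.sqrt (1 - t ^ 2) *
        (((1 : ℂ) - 1 / ((x' : ℂ) + (t : ℂ) * (y : ℂ) * Complex.I)) ^ (1/2 : ℂ)).im)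
      (F' := fun x' t => (y ^ 2 * Real.sqrt (1 - t ^ 2) / 2) *
        (1 / (((x' : ℂ) + (t : ℂ) * (y : ℂ) * Complex.I) ^ 2 *
          ((1 - 1 / ((x' : ℂ) + (t : ℂ) * (y : ℂ) * Complex.I)) ^ (1/2 : ℂ)))).im)
      (x₀ := x) (bound := fun _ => (y^2/2) * (1/(m^2 * Real.sqrt (1 - 1/m)))) (Metric.ball_mem_nhds x hε)
      ?_ ?_ ?_ ?_ ?_ ?_
    · exact key.2.neg
    · -- measurability of F near x
      filter_upwards [eventually_gt_nhds hx] with x' hx'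
      exact (contF x' y hx').aestronglyMeasurable
    · exact (contF x y hx).intervalIntegrable _ _
    · exact (contF' x y hx).aestronglyMeasurable
    · -- uniform bound
      apply Filter.Eventually.of_forall
      intro t ht x' hx'
      have hx'm : m ≤ x' := by
        have hd := abs_lt.mp (by simpa [Real.dist_eq] using Metric.mem_ball.mp hx')
        rw [hmdef]; linarith [hd.1]
      have hx'1 : 1 < x' := lt_of_lt_of_le hm1 hx'm
      rw [Real.norm_eq_abs, abs_mul]
      have h1 : |y^2*Real.sqrt (1-t^2)/2| ≤ y^2/2 := by
        rw [_root_.abs_of_nonneg (by positivity)]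
        have hle1 : Real.sqrt (1-t^2) ≤ 1 :=
          Real.sqrt_le_one.mpr (by nlinarith [sq_nonneg t])
        nlinarith [Real.sqrt_nonneg (1-t^2), sq_nonneg y]
      have h2 : |(1 / (((x' : ℂ) + (t : ℂ) * (y : ℂ) * Complex.I) ^ 2 *
          ((1 - 1 / ((x' : ℂ) + (t : ℂ) * (y : ℂ) * Complex.I)) ^ (1/2 : ℂ)))).im|
          ≤ 1/(m^2 * Real.sqrt (1 - 1/m)) := by
        set z : ℂ := (x' : ℂ) + (t : ℂ) * (y : ℂ) * Complex.I with hz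
        have hcre : ((t:ℂ) * (y:ℂ) * Complex.I).re = 0 := by simp
        have habsz : m ≤ ‖z‖ := by
          calc m ≤ x' := hx'm
            _ = z.re := (z_re x' _ hcre).symm
            _ ≤ ‖z‖ := Complex.re_le_norm z
        have habsu := abs_u_ge x' hx'1 _ hcre m hm1 hx'm
        calc |(1 / (z ^ 2 * ((1 - 1 / z) ^ (1/2 : ℂ)))).im|
            ≤ ‖1 / (z ^ 2 * ((1 - 1 / z) ^ (1/2 : ℂ)))‖ :=
              Complex.abs_im_le_norm _
          _ = 1 / (‖z‖^2 * ‖(1 - 1 / z) ^ (1/2 : ℂ)‖) := by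
              rw [norm_div, norm_one, norm_mul, norm_pow]
          _ ≤ 1/(m^2 * Real.sqrt (1 - 1/m)) := by
              apply one_div_le_one_div_of_le (by positivity)
              apply mul_le_mul (by nlinarith) habsu hsq.le (by positivity)
      exact mul_le_mul h1 h2 (abs_nonneg _) (by positivity)
    · exact intervalIntegrable_const
    · -- differentiability pointwise
      apply Filter.Eventually.of_forall
      intro t ht x' hx'
      have hx'm : m ≤ x' := by
        have hd := abs_lt.mp (by simpa [Real.dist_eq] using Metric.mem_ball.mp hx')
        rw [hmdef]; linarith [hd.1]
      have hx'1 : 1 < x' := lt_of_lt_of_le hm1 hx'm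
      exact hasDerivAt_inner (y^2*Real.sqrt (1-t^2)) ((t:ℂ)*(y:ℂ)*Complex.I) (by simp) x' hx'1
  · -- nonnegativity
    rw [← intervalIntegral.integral_neg]
    apply intervalIntegral.integral_nonneg (by norm_num)
    intro u hu
    have him := im_nonpos x hx ((u:ℂ)*(y:ℂ)*Complex.I) (by simp)
      (by simp [mul_nonneg hu.1 hy.le])
    have hc' : 0 ≤ y^2*Real.sqrt (1-u^2)/2 := by positivity
    have := mul_nonpos_of_nonneg_of_nonpos hc' him
    linarith
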